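/- Let F be a finite field with q = |F| elements, and let n, D be naturals with D ≥ 1, 2D+1 < n, and (2D+1)/n ≤ 1 − 1/q. Then there exist a natural m with m ≤ (2D+1)·log_q(n/(2D+1)) + (2D+1)·log_q(q−1) + (2D+1)·log_q(e) + 1 and a matrix M ∈ F^{m×n} such that every nonzero vector v in the kernel of M satisfies ‖v‖₀ ≥ 2D + 1 (and hence Mx = My with ‖x‖₀, ‖y‖₀ ≤ D forces x = y, so M allows Δ-approximation of the sparsity of every vector of sparsity at most D for every real Δ > 1). -/

import Mathlib

/-!
For `v ≠ 0` the additive map `M ↦ M *ᵥ v` onto `F^m` is surjective, so exactly a `q^(-m)`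
fraction of all `m × n` matrices kill `v`. A union bound over the nonzero vectors of weight at
most `2D` therefore leaves a matrix killing none of them as soon as `q^m` exceeds the size `N`
of the Hamming ball; `m = ⌊log_q N⌋ + 1` works. The ball is bounded by
`N ≤ ∑_{i ≤ k} C(n,i) (q-1)^i ≤ ((q-1) e n / k)^k` with `k = 2D + 1`, using
`C(n,i) ≤ n^i / i! ≤ (n/k)^k k^i / i!` and `∑ k^i / i! ≤ e^k`.
-/

/-- The sparsity (number of nonzero entries) of a vector. -/
noncomputable def sparsity {F : Type*} [Zero F] {n : ℕ} (x : Fin n → F) : ℕ :=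
  Set.ncard {i | x i ≠ 0}

open Finset
open scoped Nat

theorem sum_range_choose_le_exp_mul_div_pow {n k : ℕ} (hk : 0 < k) (hkn : k ≤ n) :
    (∑ i ∈ range (k + 1), (n.choose i : ℝ)) ≤ (Real.exp 1 * n / k) ^ k := by
  have hnk : 1 ≤ (n : ℝ) / k := by
    rw [one_le_div (by positivity)]
    exact_mod_cast hkn
  calc ∑ i ∈ range (k + 1), (n.choose i : ℝ)
      ≤ ∑ i ∈ range (k + 1), ((n : ℝ) / k) ^ k * ((k : ℝ) ^ i / i !) := by
        refine sum_le_sum fun i hi => (Nat.choose_le_pow_div i n).trans ?_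
        have hik : i ≤ k := mem_range_succ_iff.1 hi
        calc (n : ℝ) ^ i / i ! = ((n : ℝ) / k) ^ i * ((k : ℝ) ^ i / i !) := by
              rw [div_pow, div_mul_div_cancel₀ (by positivity)]
          _ ≤ ((n : ℝ) / k) ^ k * ((k : ℝ) ^ i / i !) := by
              gcongr
    _ = ((n : ℝ) / k) ^ k * ∑ i ∈ range (k + 1), (k : ℝ) ^ i / i ! := by rw [mul_sum]
    _ ≤ ((n : ℝ) / k) ^ k * Real.exp k := by
        gcongr
        exact Real.sum_le_exp_of_nonneg (by positivity) _
    _ = (Real.exp 1 * n / k) ^ k := by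
        rw [← Real.exp_one_pow, ← mul_pow, mul_div_assoc, mul_comm]

section HammingBall

variable {ι F : Type*} [Fintype ι] [DecidableEq ι] [Zero F] [Fintype F] [DecidableEq F]

theorem card_filter_support_eq (s : Finset ι) :
    #{v : ι → F | ({i | v i ≠ 0} : Finset ι) = s} = (Fintype.card F - 1) ^ #s := by
  have : ({v : ι → F | ({i | v i ≠ 0} : Finset ι) = s} : Finset _) =
      Fintype.piFinset fun i => if i ∈ s then univ.erase 0 else {0} := by
    ext v
    simp only [mem_filter, mem_univ, true_and, Fintype.mem_piFinset, Finset.ext_iff]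
    refine forall_congr' fun i => ?_
    split_ifs with hi <;> simp [hi]
  rw [this, Fintype.card_piFinset]
  simp [apply_ite, card_erase_of_mem, prod_ite_mem]

theorem card_filter_hammingNorm_eq (k : ℕ) :
    #{v : ι → F | hammingNorm v = k} =
      (Fintype.card ι).choose k * (Fintype.card F - 1) ^ k := by
  rw [card_eq_sum_card_fiberwise (s := {v : ι → F | hammingNorm v = k})
    (f := fun v : ι → F => ({i | v i ≠ 0} : Finset ι)) (t := powersetCard k univ)
    fun v hv => mem_powersetCard_univ.2 (mem_filter.1 hv).2]
  rw [sum_congr rfl fun s hs => ?_, sum_const, card_powersetCard, Finset.card_univ, smul_eq_mul]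
  rw [mem_powersetCard_univ] at hs
  rw [← hs, ← card_filter_support_eq, filter_filter]
  congr 1
  ext v
  simp only [mem_filter, mem_univ, true_and, and_iff_right_iff_imp]
  rintro rfl
  rfl

theorem card_filter_hammingNorm_le (k : ℕ) :
    #{v : ι → F | hammingNorm v ≤ k} =
      ∑ i ∈ range (k + 1), (Fintype.card ι).choose i * (Fintype.card F - 1) ^ i := by
  rw [card_eq_sum_card_fiberwise (s := {v : ι → F | hammingNorm v ≤ k}) (f := hammingNorm)
    (t := range (k + 1)) fun v hv => mem_range_succ_iff.2 (mem_filter.1 hv).2]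
  refine sum_congr rfl fun i hi => ?_
  rw [← card_filter_hammingNorm_eq, filter_filter]
  congr 1
  ext v
  simp only [mem_filter, mem_univ, true_and, and_iff_right_iff_imp]
  rintro rfl
  exact mem_range_succ_iff.1 hi

variable [Nontrivial F] {k : ℕ}

theorem card_filter_hammingNorm_le_le_pow (hk : 0 < k) (hkn : k ≤ Fintype.card ι) :
    (#{v : ι → F | hammingNorm v ≤ k} : ℝ) ≤
      (((Fintype.card F : ℝ) - 1) * (Real.exp 1 * Fintype.card ι / k)) ^ k := by
  have hq : 1 ≤ (Fintype.card F : ℝ) - 1 := by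
    have : 2 ≤ Fintype.card F := Fintype.one_lt_card
    rw [le_sub_iff_add_le]
    exact_mod_cast this
  set q : ℝ := ↑(Fintype.card F)
  rw [card_filter_hammingNorm_le, Nat.cast_sum]
  calc ∑ i ∈ range (k + 1), (((Fintype.card ι).choose i * (Fintype.card F - 1) ^ i : ℕ) : ℝ)
      ≤ ∑ i ∈ range (k + 1), ((Fintype.card ι).choose i : ℝ) * (q - 1) ^ k := by
        refine sum_le_sum fun i hi => ?_
        rw [Nat.cast_mul, Nat.cast_pow, Nat.cast_sub Fintype.card_pos, Nat.cast_one]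
        gcongr
        exact mem_range_succ_iff.1 hi
    _ = (q - 1) ^ k * ∑ i ∈ range (k + 1), ((Fintype.card ι).choose i : ℝ) := by
        rw [← sum_mul, mul_comm]
    _ ≤ (q - 1) ^ k * (Real.exp 1 * Fintype.card ι / k) ^ k := by
        gcongr
        exact sum_range_choose_le_exp_mul_div_pow hk hkn
    _ = _ := (mul_pow _ _ _).symm

theorem logb_card_filter_hammingNorm_le_le (hk : 0 < k) (hkn : k ≤ Fintype.card ι) :
    Real.logb (Fintype.card F) #{v : ι → F | hammingNorm v ≤ k} ≤
      k * Real.logb (Fintype.card F) (Fintype.card ι / k) +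
        k * Real.logb (Fintype.card F) ((Fintype.card F : ℝ) - 1) +
        k * Real.logb (Fintype.card F) (Real.exp 1) := by
  have hq : (1 : ℝ) < Fintype.card F := by exact_mod_cast Fintype.one_lt_card
  have hq' : (0 : ℝ) < (Fintype.card F : ℝ) - 1 := sub_pos.2 hq
  have hn : (0 : ℝ) < Fintype.card ι := by exact_mod_cast hk.trans_le hkn
  have hball : (0 : ℝ) < #{v : ι → F | hammingNorm v ≤ k} := by
    exact_mod_cast card_pos.2 ⟨0, by simp⟩
  refine (Real.logb_le_logb_of_le hq hball
    (card_filter_hammingNorm_le_le_pow hk hkn)).trans_eq ?_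
  rw [Real.logb_pow, Real.logb_mul hq'.ne' (by positivity), mul_div_assoc,
    Real.logb_mul (by positivity) (by positivity)]
  ring

end HammingBall

theorem AddMonoidHom.card_filter_eq_zero_mul_card_of_surjective {G M : Type*} [AddGroup G]
    [Fintype G] [AddGroup M] [Fintype M] [DecidableEq M] (f : G →+ M)
    (hf : Function.Surjective f) :
    #{g | f g = 0} * Fintype.card M = Fintype.card G := by
  rw [← Finset.card_univ (α := G), card_eq_sum_card_fiberwise (s := univ) (f := f) (t := univ)
    fun _ _ => mem_univ _, sum_congr rfl fun y _ =>
      AddMonoidHom.card_fiber_eq_of_mem_range f (hf y) ⟨0, map_zero f⟩, sum_const,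
    Finset.card_univ, smul_eq_mul, mul_comm]

namespace Matrix

variable {κ ι R : Type*} [Fintype ι]

theorem surjective_mulVec_left_of_ne_zero [DivisionRing R] {v : ι → R} (hv : v ≠ 0) :
    Function.Surjective fun M : Matrix κ ι R => M *ᵥ v := by
  classical
  obtain ⟨j, hj⟩ := Function.ne_iff.1 hv
  refine fun w => ⟨vecMulVec w (Pi.single j (v j)⁻¹), ?_⟩
  simp [vecMulVec_mulVec, single_dotProduct, inv_mul_cancel₀ hj]

theorem eq_of_mulVec_eq_of_hammingNorm_add_lt [Ring R] [DecidableEq R] {M : Matrix κ ι R}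
    {d : ℕ} (hM : ∀ v, M *ᵥ v = 0 → v ≠ 0 → d ≤ hammingNorm v) {x y : ι → R}
    (hxy : hammingNorm x + hammingNorm y < d) (h : M *ᵥ x = M *ᵥ y) : x = y := by
  by_contra hne
  have hdist : hammingNorm (x - y) ≤ hammingNorm x + hammingNorm y := by
    calc hammingNorm (x - y) = hammingDist y x := by
          rw [hammingDist_eq_hammingNorm, neg_add_eq_sub]
      _ ≤ hammingDist y 0 + hammingDist 0 x := hammingDist_triangle y 0 x
      _ = hammingNorm x + hammingNorm y := by
          rw [hammingDist_zero_right, hammingDist_zero_left, add_comm]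
  have := hM (x - y) (by rw [mulVec_sub, h, sub_self]) (sub_ne_zero.2 hne)
  omega

variable [Fintype κ] [DecidableEq ι] [DecidableEq κ]

theorem card_filter_mulVec_eq_zero_mul [DivisionRing R] [Fintype R] [DecidableEq R]
    {v : ι → R} (hv : v ≠ 0) :
    #{M : Matrix κ ι R | M *ᵥ v = 0} * Fintype.card R ^ Fintype.card κ =
      Fintype.card (Matrix κ ι R) := by
  rw [← Fintype.card_fun]
  exact (AddMonoidHom.mk' (· *ᵥ v) fun M N => add_mulVec M N v)
    |>.card_filter_eq_zero_mul_card_of_surjective (surjective_mulVec_left_of_ne_zero hv)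

theorem exists_forall_mem_mulVec_ne_zero [DivisionRing R] [Fintype R] [DecidableEq R]
    (B : Finset (ι → R)) (hB : 0 ∉ B) (hcard : #B < Fintype.card R ^ Fintype.card κ) :
    ∃ M : Matrix κ ι R, ∀ v ∈ B, M *ᵥ v ≠ 0 := by
  set bad := B.biUnion fun v => {M : Matrix κ ι R | M *ᵥ v = 0}
  have hbad : #bad * Fintype.card R ^ Fintype.card κ ≤ #B * Fintype.card (Matrix κ ι R) := by
    refine (Nat.mul_le_mul_right _ card_biUnion_le).trans ?_
    rw [sum_mul, sum_congr rfl fun v hv =>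
      card_filter_mulVec_eq_zero_mul (ne_of_mem_of_not_mem hv hB), sum_const, smul_eq_mul]
  have hlt : #bad < #(univ : Finset (Matrix κ ι R)) := by
    rw [Finset.card_univ]
    refine Nat.lt_of_mul_lt_mul_right (a := Fintype.card R ^ Fintype.card κ) ?_
    rw [mul_comm (Fintype.card _)]
    exact hbad.trans_lt (Nat.mul_lt_mul_of_pos_right hcard Fintype.card_pos)
  obtain ⟨M, -, hM⟩ := exists_mem_notMem_of_card_lt_card hlt
  exact ⟨M, fun v hv hMv => hM (mem_biUnion.2 ⟨v, hv, by simpa using hMv⟩)⟩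

theorem exists_le_hammingNorm_of_mulVec_eq_zero [DivisionRing R] [Fintype R] [DecidableEq R]
    {d : ℕ} (h : #{v : ι → R | hammingNorm v < d} < Fintype.card R ^ Fintype.card κ) :
    ∃ M : Matrix κ ι R, ∀ v, M *ᵥ v = 0 → v ≠ 0 → d ≤ hammingNorm v := by
  obtain ⟨M, hM⟩ := exists_forall_mem_mulVec_ne_zero (κ := κ)
    (({v : ι → R | hammingNorm v < d} : Finset _).erase 0) (notMem_erase _ _)
    (card_erase_le.trans_lt h)
  refine ⟨M, fun v hMv hv => ?_⟩
  by_contra! hvd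
  exact hM v (mem_erase.2 ⟨hv, by simpa using hvd⟩) hMv

end Matrix

theorem sparsity_eq_hammingNorm {F : Type*} [Zero F] [DecidableEq F] {n : ℕ} (x : Fin n → F) :
    sparsity x = hammingNorm x := by
  rw [sparsity, hammingNorm, ← Set.ncard_coe_finset, coe_filter]
  simp

theorem gv_bound_matrix_asymptotic_general (F : Type*) [Field F] [Fintype F] (n D : ℕ)
    (hn : 2 * D + 1 < n) :
    ∃ m : ℕ,
      (m : ℝ) ≤ ((2 * D + 1 : ℕ) : ℝ) *
          Real.logb (Fintype.card F) ((n : ℝ) / ((2 * D + 1 : ℕ) : ℝ)) +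
        ((2 * D + 1 : ℕ) : ℝ) * Real.logb (Fintype.card F) ((Fintype.card F : ℝ) - 1) +
        ((2 * D + 1 : ℕ) : ℝ) * Real.logb (Fintype.card F) (Real.exp 1) + 1 ∧
      ∃ M : Matrix (Fin m) (Fin n) F,
        (∀ v : Fin n → F, M.mulVec v = 0 → v ≠ 0 → 2 * D + 1 ≤ sparsity v) ∧
        (∀ x y : Fin n → F, sparsity x ≤ D → sparsity y ≤ D →
          M.mulVec x = M.mulVec y → x = y) := by
  classical
  set q := Fintype.card F
  set N := #{v : Fin n → F | hammingNorm v ≤ 2 * D + 1}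
  have hq : 1 < q := Fintype.one_lt_card
  obtain ⟨M, hM⟩ := Matrix.exists_le_hammingNorm_of_mulVec_eq_zero
      (κ := Fin (Nat.log q N + 1)) (d := 2 * D + 1) <| calc
    #{v : Fin n → F | hammingNorm v < 2 * D + 1} ≤ N :=
      card_le_card (monotone_filter_right _ fun _ _ h => h.le)
    _ < q ^ Fintype.card (Fin (Nat.log q N + 1)) := by
      rw [Fintype.card_fin]
      exact Nat.lt_pow_succ_log_self hq N
  refine ⟨Nat.log q N + 1, ?_, M, fun v hMv hv => ?_, fun x y hx hy hxy => ?_⟩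
  · have hlog := logb_card_filter_hammingNorm_le_le (F := F) (ι := Fin n) (k := 2 * D + 1)
      (by omega) (by rw [Fintype.card_fin]; omega)
    rw [Fintype.card_fin] at hlog
    have := Real.natLog_le_logb N q
    push_cast at hlog this ⊢
    linarith
  · rw [sparsity_eq_hammingNorm]
    exact hM v hMv hv
  · rw [sparsity_eq_hammingNorm] at hx hy
    exact Matrix.eq_of_mulVec_eq_of_hammingNorm_add_lt hM (by omega) hxy

/-- Asymptotic form of the Gilbert–Varshamov-type bound: over a finite field `F` with `q`
elements, if `D ≥ 1`, `2D+1 < n`, and `(2D+1)/n ≤ 1 − 1/q`, there is a matrix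
`M ∈ F^{m×n}` with `m ≤ (2D+1)·log_q(n/(2D+1)) + (2D+1)·log_q(q−1) + (2D+1)·log_q(e) + 1`
rows all of whose nonzero kernel vectors have sparsity at least `2D+1`; hence
`M x = M y` with `‖x‖₀, ‖y‖₀ ≤ D` forces `x = y`, so `M` allows `Δ`-approximation of the
sparsity of all vectors of sparsity at most `D` for every `Δ > 1`. -/
theorem gv_bound_matrix_asymptotic (F : Type*) [Field F] [Fintype F] (n D : ℕ)
    (hD : 1 ≤ D) (hn : 2 * D + 1 < n)
    (h : ((2 * D + 1 : ℕ) : ℝ) / (n : ℝ) ≤ 1 - 1 / (Fintype.card F : ℝ)) :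
    ∃ m : ℕ,
      (m : ℝ) ≤ ((2 * D + 1 : ℕ) : ℝ) *
          Real.logb (Fintype.card F) ((n : ℝ) / ((2 * D + 1 : ℕ) : ℝ)) +
        ((2 * D + 1 : ℕ) : ℝ) * Real.logb (Fintype.card F) ((Fintype.card F : ℝ) - 1) +
        ((2 * D + 1 : ℕ) : ℝ) * Real.logb (Fintype.card F) (Real.exp 1) + 1 ∧
      ∃ M : Matrix (Fin m) (Fin n) F,
        (∀ v : Fin n → F, M.mulVec v = 0 → v ≠ 0 → 2 * D + 1 ≤ sparsity v) ∧
        (∀ x y : Fin n → F, sparsity x ≤ D → sparsity y ≤ D →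
          M.mulVec x = M.mulVec y → x = y) :=
  gv_bound_matrix_asymptotic_general F n D hn
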